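/- arXiv:1202.2965 — 2 statements merged into one kernel-verified Lean document; each statement's English description precedes it below -/
import Mathlib

section
/- Let f : ℝ → ℝ be continuously differentiable and 2π-periodic with |f(x)| < 1/2 for all x, let μ : [0,∞) → (0,∞) be continuously differentiable, and let u : ℝ² → ℝ be twice continuously differentiable with u(x + 2π, y) = u(x, y) for all (x,y). Suppose that ∇·(∇u/μ(|∇u|²)) = 0 at every point (x,y) with −1 ≤ y ≤ f(x), and that ∂_y u(x, −1) = 0 for all x. Then ∫₀^{2π} ((−f'(x)·∂_x u(x, f(x)) + ∂_y u(x, f(x)))/μ(|∇u(x, f(x))|²)) dx = 0. -/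
/-- Partial derivative with respect to the first variable. -/
noncomputable def pdx (u : ℝ × ℝ → ℝ) (p : ℝ × ℝ) : ℝ :=
  deriv (fun t => u (t, p.2)) p.1

/-- Partial derivative with respect to the second variable. -/
noncomputable def pdy (u : ℝ × ℝ → ℝ) (p : ℝ × ℝ) : ℝ :=
  deriv (fun t => u (p.1, t)) p.2

lemma pdx_eq_fderiv {w : ℝ × ℝ → ℝ} {a b : ℝ} (hw : DifferentiableAt ℝ w (a, b)) :
    pdx w (a, b) = fderiv ℝ w (a, b) (1, 0) := by
  have hcurve : HasDerivAt (fun s : ℝ => ((s, b) : ℝ × ℝ)) ((1 : ℝ), (0 : ℝ)) a :=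
    (hasDerivAt_id a).prodMk (hasDerivAt_const a b)
  exact (hw.hasFDerivAt.comp_hasDerivAt a hcurve).deriv

lemma pdy_eq_fderiv {w : ℝ × ℝ → ℝ} {a b : ℝ} (hw : DifferentiableAt ℝ w (a, b)) :
    pdy w (a, b) = fderiv ℝ w (a, b) (0, 1) := by
  have hcurve : HasDerivAt (fun s : ℝ => ((a, s) : ℝ × ℝ)) ((0 : ℝ), (1 : ℝ)) b :=
    (hasDerivAt_const b a).prodMk (hasDerivAt_id b)
  exact (hw.hasFDerivAt.comp_hasDerivAt b hcurve).deriv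

lemma hasDerivAt_comp_curve {w : ℝ × ℝ → ℝ} {α β : ℝ → ℝ} {α' β' t : ℝ}
    (hw : DifferentiableAt ℝ w (α t, β t))
    (hα : HasDerivAt α α' t) (hβ : HasDerivAt β β' t) :
    HasDerivAt (fun s => w (α s, β s))
      (α' * pdx w (α t, β t) + β' * pdy w (α t, β t)) t := by
  have hcurve : HasDerivAt (fun s : ℝ => ((α s, β s) : ℝ × ℝ)) (α', β') t := hα.prodMk hβ
  have h := hw.hasFDerivAt.comp_hasDerivAt t hcurve
  refine h.congr_deriv ?_
  rw [pdx_eq_fderiv hw, pdy_eq_fderiv hw]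
  have e : ((α', β') : ℝ × ℝ) = α' • ((1 : ℝ), (0 : ℝ)) + β' • ((0 : ℝ), (1 : ℝ)) := by
    simp [Prod.ext_iff]
  rw [e, map_add, map_smul, map_smul, smul_eq_mul, smul_eq_mul]

open MeasureTheory intervalIntegral Set Metric

/-- volume preservation for the mud phase: if `f` is `C¹`, `2π`-periodic
with `|f| < 1/2`, `μ : [0,∞) → (0,∞)` is `C¹`, `u` is `C²` and `2π`-periodic in `x`,
`∇·(∇u/μ(|∇u|²)) = 0` on `{−1 ≤ y ≤ f(x)}`, and `∂_y u(x,−1) = 0` for all `x`, then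
`∫₀^{2π} (−f' ∂_x u + ∂_y u)(x, f(x))/μ(|∇u(x,f(x))|²) dx = 0`. -/
theorem mud_volume_preserved (f : ℝ → ℝ) (μ : ℝ → ℝ) (u : ℝ × ℝ → ℝ)
    (hf : ContDiff ℝ 1 f) (hfper : Function.Periodic f (2 * Real.pi))
    (hfb : ∀ x, |f x| < 1 / 2)
    (hμ : ContDiffOn ℝ 1 μ (Set.Ici 0)) (hμpos : ∀ s ∈ Set.Ici (0 : ℝ), 0 < μ s)
    (hu : ContDiff ℝ 2 u)
    (huper : ∀ x y : ℝ, u (x + 2 * Real.pi, y) = u (x, y))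
    (hdiv : ∀ p : ℝ × ℝ, -1 ≤ p.2 → p.2 ≤ f p.1 →
      pdx (fun q => pdx u q / μ (pdx u q ^ 2 + pdy u q ^ 2)) p
        + pdy (fun q => pdy u q / μ (pdx u q ^ 2 + pdy u q ^ 2)) p = 0)
    (hbot : ∀ x : ℝ, pdy u (x, -1) = 0) :
    ∫ x in (0 : ℝ)..(2 * Real.pi),
      (-(deriv f x) * pdx u (x, f x) + pdy u (x, f x))
        / μ (pdx u (x, f x) ^ 2 + pdy u (x, f x) ^ 2) = 0 := by
  -- basic regularity
  have hu1 : ContDiff ℝ 1 u := hu.of_le one_le_two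
  have hud : Differentiable ℝ u := hu1.differentiable one_ne_zero
  have hfd : Differentiable ℝ f := hf.differentiable one_ne_zero
  have hfderC : Continuous (deriv f) := hf.continuous_deriv le_rfl
  -- pdx u, pdy u are C¹
  have hpdx_eq : pdx u = fun p => fderiv ℝ u p (1, 0) := by
    funext p
    obtain ⟨a, b⟩ := p
    exact pdx_eq_fderiv (hud _)
  have hpdy_eq : pdy u = fun p => fderiv ℝ u p (0, 1) := by
    funext p
    obtain ⟨a, b⟩ := p
    exact pdy_eq_fderiv (hud _)
  have hpdxC : ContDiff ℝ 1 (pdx u) := by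
    rw [hpdx_eq]
    exact (hu.fderiv_right (by norm_num)).clm_apply contDiff_const
  have hpdyC : ContDiff ℝ 1 (pdy u) := by
    rw [hpdy_eq]
    exact (hu.fderiv_right (by norm_num)).clm_apply contDiff_const
  -- the modulus term
  set S : ℝ × ℝ → ℝ := fun p => pdx u p ^ 2 + pdy u p ^ 2 with hS
  have hSC : ContDiff ℝ 1 S := (hpdxC.pow 2).add (hpdyC.pow 2)
  have hS0 : ∀ p, 0 ≤ S p := fun p => by positivity
  have hmC : ContDiff ℝ 1 (fun p => μ (S p)) := by
    rw [← contDiffOn_univ]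
    exact hμ.comp (hSC.contDiffOn) (fun p _ => hS0 p)
  have hmpos : ∀ p, 0 < μ (S p) := fun p => hμpos _ (hS0 p)
  have hmne : ∀ p, μ (S p) ≠ 0 := fun p => (hmpos p).ne'
  -- the velocity field
  set V₁ : ℝ × ℝ → ℝ := fun q => pdx u q / μ (pdx u q ^ 2 + pdy u q ^ 2) with hV₁def
  set V₂ : ℝ × ℝ → ℝ := fun q => pdy u q / μ (pdx u q ^ 2 + pdy u q ^ 2) with hV₂def
  have hV₁C : ContDiff ℝ 1 V₁ := hpdxC.div hmC hmne
  have hV₂C : ContDiff ℝ 1 V₂ := hpdyC.div hmC hmne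
  have hV₁d : Differentiable ℝ V₁ := hV₁C.differentiable one_ne_zero
  have hV₂d : Differentiable ℝ V₂ := hV₂C.differentiable one_ne_zero
  -- partials of V are continuous
  have hpdxV₁eq : pdx V₁ = fun p => fderiv ℝ V₁ p (1, 0) := by
    funext p; obtain ⟨a, b⟩ := p; exact pdx_eq_fderiv (hV₁d _)
  have hpdyV₁eq : pdy V₁ = fun p => fderiv ℝ V₁ p (0, 1) := by
    funext p; obtain ⟨a, b⟩ := p; exact pdy_eq_fderiv (hV₁d _)
  have hpdyV₂eq : pdy V₂ = fun p => fderiv ℝ V₂ p (0, 1) := by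
    funext p; obtain ⟨a, b⟩ := p; exact pdy_eq_fderiv (hV₂d _)
  have hpdxV₁C : Continuous (pdx V₁) := by
    rw [hpdxV₁eq]; exact (hV₁C.continuous_fderiv one_ne_zero).clm_apply continuous_const
  have hpdyV₁C : Continuous (pdy V₁) := by
    rw [hpdyV₁eq]; exact (hV₁C.continuous_fderiv one_ne_zero).clm_apply continuous_const
  have hpdyV₂C : Continuous (pdy V₂) := by
    rw [hpdyV₂eq]; exact (hV₂C.continuous_fderiv one_ne_zero).clm_apply continuous_const
  -- |f| < 1/2 gives f + 1 > 0 and f ≤ f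
  have hpos : ∀ x, 0 < f x + 1 := by
    intro x
    have := abs_lt.1 (hfb x)
    linarith [this.1]
  -- the flux potential F
  set c : ℝ → ℝ → ℝ := fun x t => -1 + t * (f x + 1) with hc
  set F : ℝ → ℝ := fun x => ∫ t in (0 : ℝ)..1, (f x + 1) * V₁ (x, c x t) with hF
  -- periodicity of everything in x
  have hpdxper : ∀ x y, pdx u (x + 2 * Real.pi, y) = pdx u (x, y) := by
    intro x y
    have hgeq : (fun t => u (t + 2 * Real.pi, y)) = fun t => u (t, y) := by
      funext t; exact huper t y
    calc pdx u (x + 2 * Real.pi, y) = deriv (fun t => u (t, y)) (x + 2 * Real.pi) := rfl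
      _ = deriv (fun t => u (t + 2 * Real.pi, y)) x := by
          rw [← deriv_comp_add_const]
      _ = deriv (fun t => u (t, y)) x := by rw [hgeq]
      _ = pdx u (x, y) := rfl
  have hpdyper : ∀ x y, pdy u (x + 2 * Real.pi, y) = pdy u (x, y) := by
    intro x y
    have : (fun s => u (x + 2 * Real.pi, s)) = fun s => u (x, s) := by
      funext s; exact huper x s
    simp only [pdy, this]
  have hV₁per : ∀ x y, V₁ (x + 2 * Real.pi, y) = V₁ (x, y) := by
    intro x y
    simp only [hV₁def, hpdxper, hpdyper]
  have hFper : F (2 * Real.pi) = F 0 := by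
    have : F (0 + 2 * Real.pi) = F 0 := by
      simp only [hF, hc, hfper 0, hV₁per]
    simpa using this
  -- joint continuity helpers
  have hcC : Continuous (fun p : ℝ × ℝ => c p.1 p.2) := by
    simp only [hc]
    fun_prop
  have hcurveC : Continuous (fun p : ℝ × ℝ => ((p.1, c p.1 p.2) : ℝ × ℝ)) :=
    continuous_fst.prodMk hcC
  -- the derivative integrand
  set H : ℝ → ℝ → ℝ := fun x t =>
    deriv f x * V₁ (x, c x t)
      + (f x + 1) * (pdx V₁ (x, c x t) + (t * deriv f x) * pdy V₁ (x, c x t)) with hH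
  have hHC : Continuous (fun p : ℝ × ℝ => H p.1 p.2) := by
    simp only [hH]
    apply Continuous.add
    · exact (hfderC.comp continuous_fst).mul (hV₁C.continuous.comp hcurveC)
    · apply Continuous.mul
      · fun_prop
      · apply Continuous.add
        · exact hpdxV₁C.comp hcurveC
        · exact ((continuous_snd.mul (hfderC.comp continuous_fst))).mul
            (hpdyV₁C.comp hcurveC)
  -- derivative of F
  have hF' : ∀ x₀ : ℝ, HasDerivAt F (deriv f x₀ * V₁ (x₀, f x₀) - V₂ (x₀, f x₀)) x₀ := by
    intro x₀
    -- Step 1: differentiate under the integral sign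
    have hdiff : ∀ t : ℝ, ∀ x : ℝ,
        HasDerivAt (fun x => (f x + 1) * V₁ (x, c x t)) (H x t) x := by
      intro t x
      have h1 : HasDerivAt (fun x => f x + 1) (deriv f x) x :=
        ((hfd x).hasDerivAt).add_const 1
      have hct : HasDerivAt (fun x => c x t) (t * deriv f x) x := by
        simpa [hc] using (h1.const_mul t).const_add (-1)
      have h2 : HasDerivAt (fun x => V₁ (x, c x t))
          (1 * pdx V₁ (x, c x t) + (t * deriv f x) * pdy V₁ (x, c x t)) x :=
        hasDerivAt_comp_curve (hV₁d _) (hasDerivAt_id x) hct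
      have := h1.mul h2
      simp only [hH, one_mul] at this ⊢
      exact this
    -- uniform bound on a compact neighbourhood
    obtain ⟨q₀, hq₀, hM⟩ := (isCompact_closedBall x₀ 1 |>.prod isCompact_Icc).exists_isMaxOn
      (⟨(x₀, 0), by simp [Set.mem_prod, Real.pi_pos.le]⟩ :
        Set.Nonempty (closedBall x₀ 1 ×ˢ Set.Icc (0:ℝ) 1))
      (hHC.norm.continuousOn)
    set M : ℝ := ‖H q₀.1 q₀.2‖ with hMdef
    have key := intervalIntegral.hasDerivAt_integral_of_dominated_loc_of_deriv_le
      (F := fun x t => (f x + 1) * V₁ (x, c x t)) (F' := H) (x₀ := x₀)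
      (a := (0:ℝ)) (b := 1) (μ := volume) (bound := fun _ => M)
      (ball_mem_nhds x₀ (by norm_num : (0:ℝ) < 1))
      (Filter.Eventually.of_forall fun x =>
        (((continuous_const.mul (hV₁C.continuous.comp
          (continuous_const.prodMk (hcC.comp (continuous_const.prodMk continuous_id)))))
          ).aestronglyMeasurable : AEStronglyMeasurable _ _))
      (by
        apply Continuous.intervalIntegrable
        exact continuous_const.mul (hV₁C.continuous.comp
          (continuous_const.prodMk (hcC.comp (continuous_const.prodMk continuous_id)))))
      ((hHC.comp (continuous_const.prodMk continuous_id)).aestronglyMeasurable)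
      (Filter.Eventually.of_forall fun t ht x hx => by
        have ht' : t ∈ Set.Icc (0:ℝ) 1 := by
          rw [Set.uIoc_of_le (by norm_num : (0:ℝ) ≤ 1)] at ht
          exact ⟨ht.1.le, ht.2⟩
        have hmem : ((x, t) : ℝ × ℝ) ∈ closedBall x₀ 1 ×ˢ Set.Icc (0:ℝ) 1 :=
          ⟨ball_subset_closedBall hx, ht'⟩
        exact hM hmem)
      (intervalIntegrable_const)
      (Filter.Eventually.of_forall fun t _ x _ => hdiff t x)
    -- Step 2: compute the resulting integral by FTC in t
    have hφ : ∀ t ∈ Set.uIcc (0:ℝ) 1,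
        HasDerivAt (fun t => t * deriv f x₀ * V₁ (x₀, c x₀ t) - V₂ (x₀, c x₀ t))
          (H x₀ t) t := by
      intro t ht
      rw [Set.uIcc_of_le (by norm_num : (0:ℝ) ≤ 1)] at ht
      have hct : HasDerivAt (fun t => c x₀ t) (f x₀ + 1) t := by
        simpa [hc] using ((hasDerivAt_id t).mul_const (f x₀ + 1)).const_add (-1)
      have hA : HasDerivAt (fun t => V₁ (x₀, c x₀ t))
          (0 * pdx V₁ (x₀, c x₀ t) + (f x₀ + 1) * pdy V₁ (x₀, c x₀ t)) t :=
        hasDerivAt_comp_curve (hV₁d _) (hasDerivAt_const t x₀) hct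
      have hB : HasDerivAt (fun t => V₂ (x₀, c x₀ t))
          (0 * pdx V₂ (x₀, c x₀ t) + (f x₀ + 1) * pdy V₂ (x₀, c x₀ t)) t :=
        hasDerivAt_comp_curve (hV₂d _) (hasDerivAt_const t x₀) hct
      have hAmul : HasDerivAt (fun t => t * deriv f x₀ * V₁ (x₀, c x₀ t))
          (deriv f x₀ * V₁ (x₀, c x₀ t)
            + (t * deriv f x₀) * (0 * pdx V₁ (x₀, c x₀ t)
              + (f x₀ + 1) * pdy V₁ (x₀, c x₀ t))) t := by
        have hid : HasDerivAt (fun t : ℝ => t * deriv f x₀) (deriv f x₀) t := by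
          simpa using (hasDerivAt_id t).mul_const (deriv f x₀)
        exact (hid.mul hA).congr_deriv (by ring)
      have hfull := hAmul.sub hB
      -- use the divergence-free condition at (x₀, c x₀ t)
      have hmem1 : (-1 : ℝ) ≤ c x₀ t := by
        simp only [hc]
        nlinarith [hpos x₀, ht.1]
      have hmem2 : c x₀ t ≤ f x₀ := by
        simp only [hc]
        nlinarith [hpos x₀, ht.2]
      have hdiv0 := hdiv (x₀, c x₀ t) hmem1 hmem2
      have hdiv0' : pdx V₁ (x₀, c x₀ t) + pdy V₂ (x₀, c x₀ t) = 0 := hdiv0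
      refine hfull.congr_deriv ?_
      simp only [hH]
      have : pdy V₂ (x₀, c x₀ t) = -pdx V₁ (x₀, c x₀ t) := by linarith
      rw [this]
      ring
    have hHint : IntervalIntegrable (H x₀) volume 0 1 :=
      (hHC.comp (continuous_const.prodMk continuous_id)).intervalIntegrable 0 1
    have hval : (∫ t in (0:ℝ)..1, H x₀ t)
        = deriv f x₀ * V₁ (x₀, f x₀) - V₂ (x₀, f x₀) := by
      rw [intervalIntegral.integral_eq_sub_of_hasDerivAt hφ hHint]
      have hc1 : c x₀ 1 = f x₀ := by simp [hc]
      have hc0 : c x₀ 0 = -1 := by simp [hc]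
      rw [hc1, hc0]
      have hbot0 : V₂ (x₀, -1) = 0 := by
        simp only [hV₂def, hbot x₀, zero_div]
      rw [hbot0]
      ring
    rw [← hval]
    exact key.2
  -- Step 3: conclude by FTC in x and periodicity
  have hDC : Continuous (fun x => deriv f x * V₁ (x, f x) - V₂ (x, f x)) := by
    have hgraph : Continuous (fun x : ℝ => ((x, f x) : ℝ × ℝ)) :=
      continuous_id.prodMk hf.continuous
    exact (hfderC.mul (hV₁C.continuous.comp hgraph)).sub (hV₂C.continuous.comp hgraph)
  have hint : (∫ x in (0:ℝ)..(2 * Real.pi), (deriv f x * V₁ (x, f x) - V₂ (x, f x)))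
      = F (2 * Real.pi) - F 0 :=
    intervalIntegral.integral_eq_sub_of_hasDerivAt (fun x _ => hF' x)
      (hDC.intervalIntegrable 0 (2 * Real.pi))
  have hzero : (∫ x in (0:ℝ)..(2 * Real.pi),
      (deriv f x * V₁ (x, f x) - V₂ (x, f x))) = 0 := by
    rw [hint, hFper, sub_self]
  -- rewrite the goal integrand
  have hgoal_eq : ∀ x : ℝ,
      (-(deriv f x) * pdx u (x, f x) + pdy u (x, f x))
        / μ (pdx u (x, f x) ^ 2 + pdy u (x, f x) ^ 2)
      = -(deriv f x * V₁ (x, f x) - V₂ (x, f x)) := by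
    intro x
    simp only [hV₁def, hV₂def]
    rw [add_div]
    ring
  calc ∫ x in (0:ℝ)..(2 * Real.pi),
      (-(deriv f x) * pdx u (x, f x) + pdy u (x, f x))
        / μ (pdx u (x, f x) ^ 2 + pdy u (x, f x) ^ 2)
      = ∫ x in (0:ℝ)..(2 * Real.pi), -(deriv f x * V₁ (x, f x) - V₂ (x, f x)) := by
        apply intervalIntegral.integral_congr
        intro x _
        exact hgoal_eq x
    _ = -∫ x in (0:ℝ)..(2 * Real.pi), (deriv f x * V₁ (x, f x) - V₂ (x, f x)) :=
        intervalIntegral.integral_neg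
    _ = 0 := by rw [hzero, neg_zero]
end

section
/- Let f : ℝ → ℝ be twice continuously differentiable with |f(x)| < 1/2 for all x, let u : ℝ² → ℝ be twice continuously differentiable, define φ_f(x,y) = (x, y + (1 − y²)·f(x)) and v = u ∘ φ_f. Then for all (x,y) ∈ ℝ × [−1,1] (so that 1 − 2yf(x) > 0): (∂²_x u + ∂²_y u)(φ_f(x,y)) = ∂²_x v(x,y) + 2·(f'(x)(y²−1)/(1−2yf(x)))·∂_x∂_y v(x,y) + ((f'(x)²(y²−1)² + 1)/(1−2yf(x))²)·∂²_y v(x,y) + (f''(x)(y²−1)/(1−2yf(x)) + 4f'(x)²y(y²−1)/(1−2yf(x))² + (2f(x)f'(x)²(y²−1)² + 2f(x))/(1−2yf(x))³)·∂_y v(x,y). -/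
lemma hasDerivAt_comp2 (w : ℝ × ℝ → ℝ) {a b : ℝ → ℝ} {x a' b' : ℝ}
    (hw : DifferentiableAt ℝ w (a x, b x))
    (ha : HasDerivAt a a' x) (hb : HasDerivAt b b' x) :
    HasDerivAt (fun t => w (a t, b t))
      (a' * fderiv ℝ w (a x, b x) (1, 0) + b' * fderiv ℝ w (a x, b x) (0, 1)) x := by
  have h := hw.hasFDerivAt.comp_hasDerivAt x (ha.prodMk hb)
  refine h.congr_deriv ?_
  have e : ((a', b') : ℝ × ℝ) = a' • ((1 : ℝ), (0 : ℝ)) + b' • ((0 : ℝ), (1 : ℝ)) := by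
    simp [Prod.ext_iff]
  rw [e, map_add, map_smul, map_smul, smul_eq_mul, smul_eq_mul]

lemma pdx_eq (w : ℝ × ℝ → ℝ) {p : ℝ × ℝ} (hw : DifferentiableAt ℝ w p) :
    pdx w p = fderiv ℝ w p (1, 0) := by
  have h := hasDerivAt_comp2 w (a := fun t => t) (b := fun _ => p.2) (x := p.1)
    (by simpa using hw) (hasDerivAt_id p.1) (hasDerivAt_const p.1 p.2)
  simpa [pdx] using h.deriv

lemma pdy_eq (w : ℝ × ℝ → ℝ) {p : ℝ × ℝ} (hw : DifferentiableAt ℝ w p) :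
    pdy w p = fderiv ℝ w p (0, 1) := by
  have h := hasDerivAt_comp2 w (a := fun _ => p.1) (b := fun t => t) (x := p.2)
    (by simpa using hw) (hasDerivAt_const p.2 p.1) (hasDerivAt_id p.2)
  simpa [pdy] using h.deriv

/-- the transformed Laplacian. For `f` twice continuously differentiable
with `|f| < 1/2`, `u` twice continuously differentiable, `φ_f(x,y) = (x, y + (1−y²)f(x))`
and `v = u ∘ φ_f`, one has, for `(x,y) ∈ ℝ × [−1,1]`,
`(Δu)(φ_f(x,y)) = ∂²_x v + 2 (f'(y²−1)/(1−2yf)) ∂_x∂_y v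
  + ((f'²(y²−1)² + 1)/(1−2yf)²) ∂²_y v
  + (f''(y²−1)/(1−2yf) + 4f'²y(y²−1)/(1−2yf)² + (2ff'²(y²−1)² + 2f)/(1−2yf)³) ∂_y v`. -/
theorem transformed_laplacian (f : ℝ → ℝ) (u v : ℝ × ℝ → ℝ)
    (hf : ContDiff ℝ 2 f) (hfb : ∀ x, |f x| < 1 / 2)
    (hu : ContDiff ℝ 2 u)
    (hv : ∀ p : ℝ × ℝ, v p = u (p.1, p.2 + (1 - p.2 ^ 2) * f p.1)) :
    ∀ x y : ℝ, -1 ≤ y → y ≤ 1 →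
      pdx (pdx u) (x, y + (1 - y ^ 2) * f x) + pdy (pdy u) (x, y + (1 - y ^ 2) * f x)
        = pdx (pdx v) (x, y)
          + 2 * (deriv f x * (y ^ 2 - 1) / (1 - 2 * y * f x)) * pdx (pdy v) (x, y)
          + (((deriv f x) ^ 2 * (y ^ 2 - 1) ^ 2 + 1) / (1 - 2 * y * f x) ^ 2)
              * pdy (pdy v) (x, y)
          + (deriv (deriv f) x * (y ^ 2 - 1) / (1 - 2 * y * f x)
              + 4 * (deriv f x) ^ 2 * y * (y ^ 2 - 1) / (1 - 2 * y * f x) ^ 2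
              + (2 * f x * (deriv f x) ^ 2 * (y ^ 2 - 1) ^ 2 + 2 * f x)
                  / (1 - 2 * y * f x) ^ 3) * pdy v (x, y) := by
  intro x y hy1 hy2
  -- basic differentiability
  have hfd : Differentiable ℝ f := hf.differentiable two_ne_zero
  have hf' : ContDiff ℝ 1 (deriv f) := by
    have h2 : (2 : WithTop ℕ∞) = 1 + 1 := by norm_num
    rw [h2] at hf
    exact (contDiff_succ_iff_deriv.mp hf).2.2
  have hfd' : Differentiable ℝ (deriv f) := hf'.differentiable one_ne_zero
  have hud : Differentiable ℝ u := hu.differentiable two_ne_zero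
  have hu1 : ContDiff ℝ 1 (fderiv ℝ u) := by
    have h2 : (2 : WithTop ℕ∞) = 1 + 1 := by norm_num
    rw [h2] at hu
    exact (contDiff_succ_iff_fderiv.mp hu).2.2
  have hfdu : Differentiable ℝ (fderiv ℝ u) := hu1.differentiable one_ne_zero
  set U1 : ℝ × ℝ → ℝ := fun q => fderiv ℝ u q (1, 0) with hU1def
  set U2 : ℝ × ℝ → ℝ := fun q => fderiv ℝ u q (0, 1) with hU2def
  have hU1 : Differentiable ℝ U1 := hfdu.clm_apply (differentiable_const _)
  have hU2 : Differentiable ℝ U2 := hfdu.clm_apply (differentiable_const _)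
  -- nonvanishing of A = 1 - 2 y f x
  have hy : |y| ≤ 1 := abs_le.mpr ⟨hy1, hy2⟩
  have hA : (0 : ℝ) < 1 - 2 * y * f x := by
    have h1 : 2 * y * f x ≤ |2 * y * f x| := le_abs_self _
    have h2 : |2 * y * f x| = 2 * (|y| * |f x|) := by
      rw [abs_mul, abs_mul]; simp [abs_of_nonneg]; ring
    have h3 : |y| * |f x| < 1 * (1 / 2) := by
      apply mul_lt_mul' hy (hfb x) (abs_nonneg _) one_pos
    nlinarith
  have hAne : (1 - 2 * y * f x) ≠ 0 := ne_of_gt hA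
  -- the curve in t
  have hb : ∀ c t : ℝ, HasDerivAt (fun s => c + (1 - c ^ 2) * f s) ((1 - c ^ 2) * deriv f t) t :=
    fun c t => ((hfd t).hasDerivAt.const_mul (1 - c ^ 2)).const_add c
  -- first derivatives of v, pointwise
  have hvx : ∀ q : ℝ × ℝ, pdx v q =
      U1 (q.1, q.2 + (1 - q.2 ^ 2) * f q.1)
        + ((1 - q.2 ^ 2) * deriv f q.1) * U2 (q.1, q.2 + (1 - q.2 ^ 2) * f q.1) := by
    intro q
    have hfun : (fun t => v (t, q.2)) = fun t => u (t, q.2 + (1 - q.2 ^ 2) * f t) :=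
      funext fun t => hv (t, q.2)
    have h := hasDerivAt_comp2 u (a := fun t => t) (b := fun t => q.2 + (1 - q.2 ^ 2) * f t)
      (x := q.1) (hud _) (hasDerivAt_id q.1) (hb q.2 q.1)
    show deriv (fun t => v (t, q.2)) q.1 = _
    rw [hfun, h.deriv]
    simp [hU1def, hU2def]
  have hvy : ∀ q : ℝ × ℝ, pdy v q =
      (1 - 2 * q.2 * f q.1) * U2 (q.1, q.2 + (1 - q.2 ^ 2) * f q.1) := by
    intro q
    have hfun : (fun t => v (q.1, t)) = fun t => u (q.1, t + (1 - t ^ 2) * f q.1) :=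
      funext fun t => hv (q.1, t)
    have hbt : HasDerivAt (fun t : ℝ => t + (1 - t ^ 2) * f q.1)
        (1 + -(2 * q.2 ^ 1) * f q.1) q.2 :=
      (hasDerivAt_id q.2).add ((((hasDerivAt_pow 2 q.2).const_sub 1).mul_const (f q.1)))
    have h := hasDerivAt_comp2 u (a := fun _ => q.1) (b := fun t => t + (1 - t ^ 2) * f q.1)
      (x := q.2) (hud _) (hasDerivAt_const q.2 q.1) hbt
    show deriv (fun t => v (q.1, t)) q.2 = _
    rw [hfun, h.deriv]
    simp only [hU1def, hU2def]
    ring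
  -- abbreviations at the image point
  set Y : ℝ := y + (1 - y ^ 2) * f x with hY
  set P : ℝ × ℝ := (x, Y) with hP
  set a11 : ℝ := fderiv ℝ U1 P (1, 0) with ha11
  set a12 : ℝ := fderiv ℝ U1 P (0, 1) with ha12
  set a21 : ℝ := fderiv ℝ U2 P (1, 0) with ha21
  set a22 : ℝ := fderiv ℝ U2 P (0, 1) with ha22
  -- symmetry of second derivatives
  have hsymm : a12 = a21 := by
    have hG : HasFDerivAt (fderiv ℝ u) (fderiv ℝ (fderiv ℝ u) P) P := (hfdu P).hasFDerivAt
    have hs := second_derivative_symmetric (f := u) (fun q => (hud q).hasFDerivAt) hG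
      ((1 : ℝ), (0 : ℝ)) ((0 : ℝ), (1 : ℝ))
    have e1 : fderiv ℝ U1 P = (fderiv ℝ (fderiv ℝ u) P).flip ((1 : ℝ), (0 : ℝ)) := by
      have := fderiv_clm_apply (hfdu P) (differentiableAt_const (((1 : ℝ), (0 : ℝ)) : ℝ × ℝ))
      simpa [hU1def] using this
    have e2 : fderiv ℝ U2 P = (fderiv ℝ (fderiv ℝ u) P).flip ((0 : ℝ), (1 : ℝ)) := by
      have := fderiv_clm_apply (hfdu P) (differentiableAt_const (((0 : ℝ), (1 : ℝ)) : ℝ × ℝ))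
      simpa [hU2def] using this
    rw [ha12, ha21, e1, e2]
    simpa using hs.symm
  -- second derivatives of u at P
  have E1 : pdx (pdx u) P = a11 := by
    have h : (fun t => pdx u (t, P.2)) = fun t => U1 (t, P.2) :=
      funext fun t => pdx_eq u (hud _)
    show deriv (fun t => pdx u (t, P.2)) P.1 = a11
    rw [h]
    exact pdx_eq U1 (hU1 P)
  have E2 : pdy (pdy u) P = a22 := by
    have h : (fun t => pdy u (P.1, t)) = fun t => U2 (P.1, t) :=
      funext fun t => pdy_eq u (hud _)
    show deriv (fun t => pdy u (P.1, t)) P.2 = a22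
    rw [h]
    exact pdy_eq U2 (hU2 P)
  -- values of U2, deriv f etc. at the relevant points
  set u2 : ℝ := U2 P with hu2
  -- derivative of the curve t ↦ U1 (t, y + (1-y²) f t), etc.
  have hU1c : HasDerivAt (fun t => U1 (t, y + (1 - y ^ 2) * f t))
      (1 * a11 + ((1 - y ^ 2) * deriv f x) * a12) x := by
    have h := hasDerivAt_comp2 U1 (a := fun t => t) (b := fun t => y + (1 - y ^ 2) * f t)
      (x := x) (by rw [show ((x, y + (1 - y ^ 2) * f x) : ℝ × ℝ) = P by rw [hP, hY]]; exact hU1 P)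
      (hasDerivAt_id x) (hb y x)
    rw [ha11, ha12, hP, hY]
    exact h
  have hU2c : HasDerivAt (fun t => U2 (t, y + (1 - y ^ 2) * f t))
      (1 * a21 + ((1 - y ^ 2) * deriv f x) * a22) x := by
    have h := hasDerivAt_comp2 U2 (a := fun t => t) (b := fun t => y + (1 - y ^ 2) * f t)
      (x := x) (by rw [show ((x, y + (1 - y ^ 2) * f x) : ℝ × ℝ) = P by rw [hP, hY]]; exact hU2 P)
      (hasDerivAt_id x) (hb y x)
    rw [ha21, ha22, hP, hY]
    exact h
  -- E3 : pdx (pdx v)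
  have E3 : pdx (pdx v) (x, y) = (1 * a11 + ((1 - y ^ 2) * deriv f x) * a12)
      + (((1 - y ^ 2) * deriv (deriv f) x) * u2
        + ((1 - y ^ 2) * deriv f x) * (1 * a21 + ((1 - y ^ 2) * deriv f x) * a22)) := by
    have hfun : (fun t => pdx v (t, y)) = fun t =>
        U1 (t, y + (1 - y ^ 2) * f t)
          + ((1 - y ^ 2) * deriv f t) * U2 (t, y + (1 - y ^ 2) * f t) :=
      funext fun t => hvx (t, y)
    have hdf : HasDerivAt (fun t => (1 - y ^ 2) * deriv f t) ((1 - y ^ 2) * deriv (deriv f) x) x :=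
      (hfd' x).hasDerivAt.const_mul _
    have h := hU1c.add (hdf.mul hU2c)
    simp only [Pi.add_def, Pi.mul_def] at h
    show deriv (fun t => pdx v (t, y)) x = _
    rw [hfun, h.deriv, hu2, hP, hY]
  -- E4 : pdx (pdy v)
  have E4 : pdx (pdy v) (x, y) = (-(2 * y * deriv f x)) * u2
      + (1 - 2 * y * f x) * (1 * a21 + ((1 - y ^ 2) * deriv f x) * a22) := by
    have hfun : (fun t => pdy v (t, y)) = fun t =>
        (1 - 2 * y * f t) * U2 (t, y + (1 - y ^ 2) * f t) :=
      funext fun t => hvy (t, y)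
    have hc : HasDerivAt (fun t => 1 - 2 * y * f t) (-(2 * y * deriv f x)) x := by
      exact ((hfd x).hasDerivAt.const_mul (2 * y)).const_sub 1
    have h := hc.mul hU2c
    simp only [Pi.mul_def] at h
    show deriv (fun t => pdy v (t, y)) x = _
    rw [hfun, h.deriv, hu2, hP, hY]
  -- E5 : pdy (pdy v)
  have E5 : pdy (pdy v) (x, y) = (-(2 * f x)) * u2
      + (1 - 2 * y * f x) * ((1 + -(2 * y ^ 1) * f x) * a22) := by
    have hfun : (fun s => pdy v (x, s)) = fun s =>
        (1 - 2 * s * f x) * U2 (x, s + (1 - s ^ 2) * f x) :=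
      funext fun s => hvy (x, s)
    have hc : HasDerivAt (fun s : ℝ => 1 - 2 * s * f x) (-(2 * f x)) y := by
      simpa using (((hasDerivAt_id y).const_mul 2).mul_const (f x)).const_sub 1
    have hbt : HasDerivAt (fun s : ℝ => s + (1 - s ^ 2) * f x)
        (1 + -(2 * y ^ 1) * f x) y :=
      (hasDerivAt_id y).add ((((hasDerivAt_pow 2 y).const_sub 1).mul_const (f x)))
    have hcurve : HasDerivAt (fun s => U2 (x, s + (1 - s ^ 2) * f x))
        (0 * fderiv ℝ U2 P (1, 0) + (1 + -(2 * y ^ 1) * f x) * fderiv ℝ U2 P (0, 1)) y := by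
      have h := hasDerivAt_comp2 U2 (a := fun _ => x) (b := fun s => s + (1 - s ^ 2) * f x)
        (x := y) (by rw [show ((x, y + (1 - y ^ 2) * f x) : ℝ × ℝ) = P by rw [hP, hY]]; exact hU2 P)
        (hasDerivAt_const y x) hbt
      rw [show ((x, y + (1 - y ^ 2) * f x) : ℝ × ℝ) = P by rw [hP, hY]] at h
      exact h
    have h := hc.mul hcurve
    simp only [Pi.mul_def] at h
    show deriv (fun s => pdy v (x, s)) y = _
    have hv2 : pdy v (x, y) = (1 - 2 * y * f x) * u2 := by
      rw [hvy (x, y), hu2, hP, hY]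
    rw [hfun, h.deriv, hu2, hP, hY, ← ha22]
    ring
  -- pdy v value
  have E6 : pdy v (x, y) = (1 - 2 * y * f x) * u2 := by
    rw [hvy (x, y), hu2, hP, hY]
  -- put everything together
  rw [E1, E2, E3, E4, E5, E6, hsymm]
  have hAne' : (1 - y * 2 * f x) ≠ 0 := by rw [mul_comm y 2]; exact hAne
  field_simp
  ring
end
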